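/- Let n be a positive even integer and let U be a rational spectral unit of finite order with Fourier coefficients (ξ_l)_{l ∈ ℤ/nℤ}. Then for every j ∈ ℤ/nℤ with j ≠ 0 and every integer k coprime with n, one has ξ_{k·j} = ξ_j^k. -/

import Mathlib

/-!
Each `ξ_j` is an eigenvalue of `U` (with eigenvector a character of `ZMod n`), hence a root of
unity, and `ξ_j = P_j(ζ)` for `ζ = exp(2πi/n)` and the rational polynomial
`P_j = ∑ u(t) X^{(j t) mod n}`, so `ξ_j ∈ ℚ(ζ)`. For even `n` every root of unity of `ℚ(ζ)` is an
`n`-th one: a primitive root of unity of order `l` in `ℚ(ζ)` yields one of order `L = lcm(l, n)`,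
so `φ(L) ≤ φ(n)`, which forces `L = n`. Hence `ξ_j = ζ^a`. As `ζ` and `ζ^k` have the same minimal
polynomial over `ℚ`, the relation `P_j(ζ) = ζ^a` also holds at `ζ^k`, and that reads
`ξ_{kj} = ξ_j^k`.
-/

open Matrix

/-- The Fourier coefficient of `u : ZMod n → ℂ` at `l`:
`ξ_l = ∑_{t} u(t) · exp(2πi·l·t/n)`. -/
noncomputable def zmodFourier (n : ℕ) [NeZero n] (u : ZMod n → ℂ) (l : ZMod n) : ℂ :=
  ∑ t : ZMod n, u t * Complex.exp (2 * Real.pi * Complex.I * ((l.val : ℂ) * (t.val : ℂ)) / n)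

open Polynomial

theorem Nat.eq_of_dvd_of_totient_le_of_even {n L : ℕ} (hn : Even n) (hnL : n ∣ L) (hL : L ≠ 0)
    (h : L.totient ≤ n.totient) : L = n := by
  obtain ⟨r, rfl⟩ := hnL
  have hn0 : n ≠ 0 := left_ne_zero_of_mul hL
  have hφn : 0 < n.totient := Nat.totient_pos.2 (Nat.pos_of_ne_zero hn0)
  have hφr : r.totient ≤ 1 :=
    le_of_mul_le_mul_left ((Nat.totient_super_multiplicative n r).trans (by simpa using h)) hφn
  rcases (Nat.dvd_prime Nat.prime_two).1
    (Nat.dvd_two_of_totient_le_one (Nat.pos_of_ne_zero (right_ne_zero_of_mul hL)) hφr) with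
    rfl | rfl
  · exact mul_one n
  · rw [mul_comm, Nat.totient_mul_of_prime_of_dvd Nat.prime_two hn.two_dvd] at h
    omega

theorem IsCyclotomicExtension.pow_eq_one_of_isOfFinOrder_of_even {n : ℕ} [NeZero n]
    {A : Type*} [CommRing A] [IsDomain A] [Algebra ℚ A] [IsCyclotomicExtension {n} ℚ A]
    (hn : Even n) {x : A} (hx : IsOfFinOrder x) : x ^ n = 1 := by
  have := IsCyclotomicExtension.finiteDimensional {n} ℚ A
  have hlcm := (IsPrimitiveRoot.orderOf x).lcm_totient_le_finrank (zeta_spec n ℚ A)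
    (cyclotomic.irreducible_rat (Nat.pos_of_ne_zero
      (Nat.lcm_ne_zero hx.orderOf_pos.ne' (NeZero.ne n))))
  rw [IsCyclotomicExtension.finrank A (cyclotomic.irreducible_rat (NeZero.pos n))] at hlcm
  have hlcm_eq := Nat.eq_of_dvd_of_totient_le_of_even hn (Nat.dvd_lcm_right _ n)
    (Nat.lcm_ne_zero hx.orderOf_pos.ne' (NeZero.ne n)) hlcm
  exact orderOf_dvd_iff_pow_eq_one.1 (hlcm_eq ▸ Nat.dvd_lcm_left _ n)

theorem IsPrimitiveRoot.pow_eq_one_of_mem_adjoin_of_even {n : ℕ} [NeZero n]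
    {L : Type*} [CommRing L] [IsDomain L] [Algebra ℚ L] {ζ x : L} (hζ : IsPrimitiveRoot ζ n)
    (hn : Even n) (hxζ : x ∈ Algebra.adjoin ℚ {ζ}) (hx : IsOfFinOrder x) : x ^ n = 1 := by
  have := hζ.adjoin_isCyclotomicExtension ℚ
  have hx' : IsOfFinOrder (⟨x, hxζ⟩ : Algebra.adjoin ℚ {ζ}) :=
    (Function.Injective.isOfFinOrder_iff (f := ((Algebra.adjoin ℚ {ζ}).val : _ →* L))
      Subtype.val_injective).1 hx
  simpa using congrArg Subtype.val
    (IsCyclotomicExtension.pow_eq_one_of_isOfFinOrder_of_even hn hx')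

theorem IsPrimitiveRoot.aeval_eq_zero_of_aeval_eq_zero {K : Type*} [Field K] [CharZero K]
    {n : ℕ} {μ ν : K} (hμ : IsPrimitiveRoot μ n) (hν : IsPrimitiveRoot ν n) (hn : 0 < n)
    {P : ℚ[X]} (hP : aeval μ P = 0) : aeval ν P = 0 := by
  refine aeval_eq_zero_of_dvd_aeval_eq_zero (p := minpoly ℚ ν) ?_ (minpoly.aeval ℚ ν)
  rw [← cyclotomic_eq_minpoly_rat hν hn, cyclotomic_eq_minpoly_rat hμ hn]
  exact minpoly.dvd ℚ μ hP

theorem Matrix.circulant_mulVec_addChar {G R : Type*} [AddCommGroup G] [Fintype G] [CommRing R]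
    (v : G → R) (ψ : AddChar G R) :
    circulant v *ᵥ (fun t => ψ (-t)) = (∑ t, v t * ψ t) • fun t => ψ (-t) := by
  funext i
  simp only [mulVec, dotProduct, circulant_apply, Pi.smul_apply, smul_eq_mul, Finset.sum_mul]
  refine Fintype.sum_equiv (Equiv.subLeft i) _ _ fun t => ?_
  simp only [Equiv.subLeft_apply, mul_assoc, ← AddChar.map_add_eq_mul]
  congr 2
  abel

theorem Matrix.pow_mulVec_of_mulVec_eq_smul {ι R : Type*} [Fintype ι] [DecidableEq ι]
    [CommRing R] {A : Matrix ι ι R} {x : ι → R} {c : R} (h : A *ᵥ x = c • x) (m : ℕ) :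
    (A ^ m) *ᵥ x = c ^ m • x := by
  induction m with
  | zero => simp
  | succ m ih => rw [pow_succ', ← mulVec_mulVec, ih, mulVec_smul, h, smul_smul, pow_succ]

theorem ZMod.isPrimitiveRoot_stdAddChar_one (n : ℕ) [NeZero n] :
    IsPrimitiveRoot (stdAddChar (1 : ZMod n)) n := by
  have hexp : stdAddChar (1 : ZMod n) = Complex.exp (2 * Real.pi * Complex.I / n) := by
    simpa using stdAddChar_coe (N := n) 1
  rw [hexp]
  exact Complex.isPrimitiveRoot_exp n (NeZero.ne n)

theorem zmodFourier_eq_sum_stdAddChar (n : ℕ) [NeZero n] (v : ZMod n → ℂ) (l : ZMod n) :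
    zmodFourier n v l = ∑ t, v t * ZMod.stdAddChar (l * t) := by
  refine Finset.sum_congr rfl fun t _ => ?_
  have hlt : l * t = ((l.val * t.val : ℕ) : ZMod n) := by simp
  rw [hlt, ZMod.stdAddChar_apply, ZMod.toCircle_natCast]
  push_cast
  ring_nf

theorem zmodFourier_pow_eq_one {n : ℕ} [NeZero n] {v : ZMod n → ℂ} {m : ℕ}
    (hm : circulant v ^ m = 1) (l : ZMod n) : zmodFourier n v l ^ m = 1 := by
  have key := Matrix.pow_mulVec_of_mulVec_eq_smul
    (circulant_mulVec_addChar v (ZMod.stdAddChar.mulShift l)) m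
  rw [hm, one_mulVec] at key
  simpa [zmodFourier_eq_sum_stdAddChar] using (congrFun key 0).symm

noncomputable def zmodFourierPoly {n : ℕ} [NeZero n] (u : ZMod n → ℚ) (j : ZMod n) : ℚ[X] :=
  ∑ t, C (u t) * X ^ (j * t).val

theorem aeval_stdAddChar_zmodFourierPoly {n : ℕ} [NeZero n] (u : ZMod n → ℚ) (c j : ZMod n) :
    aeval (ZMod.stdAddChar c) (zmodFourierPoly u j) =
      zmodFourier n (fun t => (u t : ℂ)) (c * j) := by
  simp only [zmodFourierPoly, zmodFourier_eq_sum_stdAddChar, map_sum, map_mul, aeval_C, map_pow,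
    aeval_X, ← AddChar.map_nsmul_eq_pow, nsmul_eq_mul, ZMod.natCast_zmod_val, eq_ratCast]
  exact Finset.sum_congr rfl fun t _ => by ring_nf

theorem even_spectral_unit_galois_condition_general
    (n : ℕ) [NeZero n] (hneven : Even n)
    (u : ZMod n → ℚ)
    (hfin : ∃ m : ℕ, 1 ≤ m ∧ Matrix.circulant u ^ m = 1) :
    ∀ j : ZMod n, j ≠ 0 → ∀ k : ℤ, Int.gcd k n = 1 →
      zmodFourier n (fun t => (u t : ℂ)) ((k : ZMod n) * j)
        = (zmodFourier n (fun t => (u t : ℂ)) j) ^ k := by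
  intro j _ k hk
  obtain ⟨m, hm, hum⟩ := hfin
  set ξ := zmodFourier n (fun t => (u t : ℂ)) j
  set ζ : ℂ := ZMod.stdAddChar (1 : ZMod n)
  have hζ : IsPrimitiveRoot ζ n := ZMod.isPrimitiveRoot_stdAddChar_one n
  have hζk : ZMod.stdAddChar (k : ZMod n) = ζ ^ k := by
    rw [← AddChar.map_zsmul_eq_zpow, zsmul_one]
  have hξζ : aeval ζ (zmodFourierPoly u j) = ξ := by
    simpa using aeval_stdAddChar_zmodFourierPoly u 1 j
  have hUm : circulant (fun t => (u t : ℂ)) ^ m = 1 := by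
    rw [← map_circulant, ← Rat.coe_castHom, ← RingHom.mapMatrix_apply, ← map_pow, hum, map_one]
  have hξn : ξ ^ n = 1 := hζ.pow_eq_one_of_mem_adjoin_of_even hneven
    (hξζ ▸ aeval_mem_adjoin_singleton ℚ ζ)
    (isOfFinOrder_iff_pow_eq_one.2 ⟨m, hm, zmodFourier_pow_eq_one hUm j⟩)
  obtain ⟨a, -, hζa⟩ := hζ.eq_pow_of_pow_eq_one hξn
  have hconj := hζ.aeval_eq_zero_of_aeval_eq_zero (hζ.zpow_of_gcd_eq_one k hk) (NeZero.pos n)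
    (P := zmodFourierPoly u j - X ^ a) (by simp [hξζ, hζa])
  rw [map_sub, sub_eq_zero, ← hζk, aeval_stdAddChar_zmodFourierPoly, map_pow, aeval_X] at hconj
  rw [hconj, hζk, ← hζa, ← zpow_natCast, ← zpow_natCast, ← _root_.zpow_mul, ← _root_.zpow_mul,
    mul_comm]

/-- If `n` is even and `U = M(u)` is a rational circulant matrix with `U·Uᵀ = 1` and
`U^m = 1` for some `m ≥ 1`, then for every `j ≠ 0` in `ZMod n` and every integer `k`
coprime with `n`, the Fourier coefficients satisfy `ξ_{k·j} = ξ_j ^ k`. -/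
theorem even_spectral_unit_galois_condition
    (n : ℕ) [NeZero n] (hn : 0 < n) (hneven : Even n)
    (u : ZMod n → ℚ)
    (hunit : Matrix.circulant u * (Matrix.circulant u)ᵀ = 1)
    (hfin : ∃ m : ℕ, 1 ≤ m ∧ Matrix.circulant u ^ m = 1) :
    ∀ j : ZMod n, j ≠ 0 → ∀ k : ℤ, Int.gcd k n = 1 →
      zmodFourier n (fun t => (u t : ℂ)) ((k : ZMod n) * j)
        = (zmodFourier n (fun t => (u t : ℂ)) j) ^ k :=
  even_spectral_unit_galois_condition_general n hneven u hfin
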